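/- The expected internal path-length of a random symmetric DST admits the exact formula E(X_n) = Q_∞ ∑_{ℓ≥0} (2^ℓ/Q_ℓ) ((1 - 2^{-ℓ})^n - 1 + 2^{-ℓ} n), where Q_ℓ := ∏_{1≤i≤ℓ}(1-2^{-i}) and Q_∞ := ∏_{i≥1}(1-2^{-i}). -/

import Mathlib

/-!
Write `g_x(n) = (1 - x)^n - 1 + n x` (the gap in Bernoulli's inequality) and
`w_ℓ = Q_∞ 2^ℓ / Q_ℓ`, so that the `ℓ`-th summand is `w_ℓ g_{2^{-ℓ}}(n)`. The binomial theorem gives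
`(2 / 2^n) ∑_j C(n,j) g_x(j) = 2 g_{x/2}(n)`, and `g_y(n+1) = (1 - y) g_y(n) + n y²`. Since
`w_{ℓ+1} (1 - 2^{-ℓ-1}) = 2 w_ℓ`, the `(ℓ+1)`-st summand for `n + 1` is the `ℓ`-th summand of the
right-hand side of the recursion plus `n Q_∞ 2^{-ℓ-1} / Q_{ℓ+1}`, and the `0`-th one is `n Q_∞`.
These extra terms add up to `n`: this is Euler's identity `∑_ℓ q^ℓ / (q;q)_ℓ = 1 / (q;q)_∞` at
`q = 1/2`, whose partial sums telescope to `1 / (q;q)_L`. Strong induction on `n` concludes.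
-/

open Finset Filter Topology

section EulerIdentity

variable {𝕜 : Type*} [NormedField 𝕜] {q : 𝕜}

/-- `(q;q)_ℓ`; the `Q_ℓ` and `Q_∞` of the statement are `qPochhammer (1/2) ℓ` and
`eulerFunction (1/2)`. -/
def qPochhammer (q : 𝕜) (ℓ : ℕ) : 𝕜 := ∏ i ∈ range ℓ, (1 - q ^ (i + 1))

noncomputable def eulerFunction (q : 𝕜) : 𝕜 := ∏' i, (1 - q ^ (i + 1))

@[simp]
lemma qPochhammer_zero (q : 𝕜) : qPochhammer q 0 = 1 := prod_range_zero _

lemma qPochhammer_succ (q : 𝕜) (ℓ : ℕ) :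
    qPochhammer q (ℓ + 1) = qPochhammer q ℓ * (1 - q ^ (ℓ + 1)) :=
  prod_range_succ _ _

lemma one_sub_pow_succ_ne_zero (hq : ‖q‖ < 1) (i : ℕ) : 1 - q ^ (i + 1) ≠ 0 := by
  refine sub_ne_zero.mpr fun h => ?_
  have := pow_lt_one₀ (norm_nonneg q) hq i.succ_ne_zero
  rw [← norm_pow, ← h, norm_one] at this
  exact lt_irrefl _ this

lemma qPochhammer_ne_zero (hq : ‖q‖ < 1) (ℓ : ℕ) : qPochhammer q ℓ ≠ 0 :=
  prod_ne_zero_iff.mpr fun i _ => one_sub_pow_succ_ne_zero hq i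

lemma sum_range_pow_div_qPochhammer (hq : ‖q‖ < 1) (L : ℕ) :
    ∑ ℓ ∈ range (L + 1), q ^ ℓ / qPochhammer q ℓ = (qPochhammer q L)⁻¹ := by
  induction L with
  | zero => simp
  | succ L ih =>
    have hP := qPochhammer_ne_zero hq L
    have hq' := one_sub_pow_succ_ne_zero hq L
    rw [sum_range_succ, ih, qPochhammer_succ]
    field_simp
    ring

lemma summable_norm_neg_pow_succ (hq : ‖q‖ < 1) : Summable fun i : ℕ => ‖-q ^ (i + 1)‖ := by
  simpa using (summable_nat_add_iff 1).mpr (summable_geometric_of_lt_one (norm_nonneg q) hq)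

variable [CompleteSpace 𝕜]

lemma tendsto_qPochhammer_eulerFunction (hq : ‖q‖ < 1) :
    Tendsto (qPochhammer q) atTop (𝓝 (eulerFunction q)) := by
  have := multipliable_one_add_of_summable (R := 𝕜) (summable_norm_neg_pow_succ hq)
  simp only [← sub_eq_add_neg] at this
  exact this.tendsto_prod_tprod_nat

lemma eulerFunction_ne_zero (hq : ‖q‖ < 1) : eulerFunction q ≠ 0 := by
  have := tprod_one_add_ne_zero_of_summable (R := 𝕜) (f := fun i => -q ^ (i + 1))
    (fun i => by simpa [← sub_eq_add_neg] using one_sub_pow_succ_ne_zero hq i)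
    (summable_norm_neg_pow_succ hq)
  simpa only [eulerFunction, ← sub_eq_add_neg] using this

theorem hasSum_pow_div_qPochhammer (hq : ‖q‖ < 1) :
    HasSum (fun ℓ => q ^ ℓ / qPochhammer q ℓ) (eulerFunction q)⁻¹ := by
  have hinv := (tendsto_qPochhammer_eulerFunction hq).inv₀ (eulerFunction_ne_zero hq)
  have hsummable : Summable fun ℓ => q ^ ℓ / qPochhammer q ℓ := by
    refine summable_of_isBigO_nat (summable_geometric_of_lt_one (norm_nonneg q) hq) ?_
    simpa only [div_eq_mul_inv, mul_one] using
      (Asymptotics.isBigO_of_le atTop fun ℓ => by simp [norm_pow]).mul (hinv.isBigO_one ℝ)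
  rw [hsummable.hasSum_iff_tendsto_nat, ← tendsto_add_atTop_iff_nat 1]
  simpa only [sum_range_pow_div_qPochhammer hq] using hinv

end EulerIdentity

def bernoulliGap (x : ℝ) (n : ℕ) : ℝ := (1 - x) ^ n - 1 + n * x

lemma bernoulliGap_succ (x : ℝ) (n : ℕ) :
    bernoulliGap x (n + 1) = (1 - x) * bernoulliGap x n + n * x ^ 2 := by
  simp only [bernoulliGap]
  push_cast
  ring

lemma two_div_pow_mul_sum_choose_mul_bernoulliGap (x : ℝ) (n : ℕ) :
    2 / 2 ^ n * ∑ j ∈ range (n + 1), n.choose j * bernoulliGap x j =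
      2 * bernoulliGap (x / 2) n := by
  have hpow : ∑ j ∈ range (n + 1), (n.choose j : ℝ) * (1 - x) ^ j = 2 ^ n * (1 - x / 2) ^ n := by
    rw [← mul_pow, show 2 * (1 - x / 2) = (1 - x) + 1 by ring, add_pow]
    exact sum_congr rfl fun j _ => by ring
  have hchoose : ∑ j ∈ range (n + 1), (n.choose j : ℝ) = 2 ^ n := by
    exact_mod_cast Nat.sum_range_choose n
  have hmul : ∑ j ∈ range (n + 1), (n.choose j : ℝ) * j = n * 2 ^ n / 2 := by
    rcases n with _ | n
    · simp
    · rw [pow_succ, mul_div_assoc, mul_div_cancel_right₀ _ two_ne_zero]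
      exact_mod_cast (by simpa [mul_comm] using Nat.sum_range_mul_choose (n + 1))
  have hsplit : ∑ j ∈ range (n + 1), n.choose j * bernoulliGap x j
      = ∑ j ∈ range (n + 1), (n.choose j : ℝ) * (1 - x) ^ j
        - ∑ j ∈ range (n + 1), (n.choose j : ℝ)
        + x * ∑ j ∈ range (n + 1), (n.choose j : ℝ) * j := by
    simp only [bernoulliGap, mul_sum, ← sum_sub_distrib, ← sum_add_distrib]
    exact sum_congr rfl fun j _ => by ring
  rw [hsplit, hpow, hchoose, hmul, bernoulliGap]
  field_simp

noncomputable def dstMeanTerm (ℓ n : ℕ) : ℝ :=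
  eulerFunction (1 / 2 : ℝ) * (2 ^ ℓ / qPochhammer (1 / 2) ℓ) * bernoulliGap (1 / 2 ^ ℓ) n

lemma dstMeanTerm_zero_succ (n : ℕ) : dstMeanTerm 0 (n + 1) = n * eulerFunction (1 / 2 : ℝ) := by
  simp only [dstMeanTerm, bernoulliGap, pow_zero, qPochhammer_zero, div_one, sub_self,
    zero_pow n.succ_ne_zero, Nat.cast_succ]
  ring

lemma dstMeanTerm_succ_succ (ℓ n : ℕ) :
    dstMeanTerm (ℓ + 1) (n + 1) = 2 / 2 ^ n * ∑ j ∈ range (n + 1), n.choose j * dstMeanTerm ℓ j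
      + n * (eulerFunction (1 / 2 : ℝ) * ((1 / 2) ^ (ℓ + 1) / qPochhammer (1 / 2) (ℓ + 1))) := by
  have hsum : ∑ j ∈ range (n + 1), n.choose j * dstMeanTerm ℓ j
      = eulerFunction (1 / 2 : ℝ) * (2 ^ ℓ / qPochhammer (1 / 2) ℓ) *
        ∑ j ∈ range (n + 1), n.choose j * bernoulliGap (1 / 2 ^ ℓ) j := by
    rw [mul_sum]
    exact sum_congr rfl fun j _ => by simp only [dstMeanTerm]; ring
  have hhalf : (1 / 2 ^ ℓ : ℝ) / 2 = 1 / 2 ^ (ℓ + 1) := by rw [pow_succ, div_div]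
  have hP := qPochhammer_ne_zero (q := (1 / 2 : ℝ)) (by norm_num) ℓ
  rw [hsum, mul_left_comm, two_div_pow_mul_sum_choose_mul_bernoulliGap, hhalf, dstMeanTerm,
    bernoulliGap_succ, qPochhammer_succ]
  generalize bernoulliGap (1 / 2 ^ (ℓ + 1)) n = g
  rw [one_div_pow, pow_succ]
  have ht : (1 : ℝ) ≤ 2 ^ ℓ := one_le_pow₀ one_le_two
  generalize (2 : ℝ) ^ ℓ = t at ht ⊢
  have ht₀ : t ≠ 0 := by positivity
  have ht₁ : 2 * t - 1 ≠ 0 := by linarith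
  field_simp

theorem hasSum_dstMeanTerm (μ : ℕ → ℝ) (h0 : μ 0 = 0)
    (hrec : ∀ n : ℕ,
      μ (n + 1) = (2 / 2 ^ n) * ∑ j ∈ Finset.range (n + 1), (n.choose j : ℝ) * μ j + n)
    (n : ℕ) : HasSum (fun ℓ => dstMeanTerm ℓ n) (μ n) := by
  induction n using Nat.strong_induction_on with
  | _ n ih =>
  rcases n with _ | n
  · simp [dstMeanTerm, bernoulliGap, h0]
  have heuler : HasSum
      (fun ℓ => eulerFunction (1 / 2 : ℝ) * ((1 / 2) ^ ℓ / qPochhammer (1 / 2) ℓ)) 1 := by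
    have hq : ‖(1 / 2 : ℝ)‖ < 1 := by norm_num
    simpa only [mul_inv_cancel₀ (eulerFunction_ne_zero hq)] using
      (hasSum_pow_div_qPochhammer hq).mul_left (eulerFunction (1 / 2 : ℝ))
  have hbinom : HasSum (fun ℓ => 2 / 2 ^ n * ∑ j ∈ range (n + 1), n.choose j * dstMeanTerm ℓ j)
      (2 / 2 ^ n * ∑ j ∈ range (n + 1), n.choose j * μ j) :=
    (hasSum_sum fun j hj => (ih j (mem_range.mp hj)).mul_left _).mul_left _
  have hremainder : HasSum
      (fun ℓ => dstMeanTerm ℓ (n + 1) -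
        n * (eulerFunction (1 / 2 : ℝ) * ((1 / 2) ^ ℓ / qPochhammer (1 / 2) ℓ)))
      (2 / 2 ^ n * ∑ j ∈ range (n + 1), n.choose j * μ j) := by
    refine (hasSum_nat_add_iff' 1).mp ?_
    simpa only [dstMeanTerm_succ_succ, add_sub_cancel_right, sum_range_one, dstMeanTerm_zero_succ,
      pow_zero, qPochhammer_zero, div_one, mul_one, sub_self, sub_zero] using hbinom
  simpa only [sub_add_cancel, mul_one, ← hrec] using hremainder.add (heuler.mul_left (n : ℝ))

theorem dst_mean_exact_formula (μ : ℕ → ℝ) (h0 : μ 0 = 0)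
    (hrec : ∀ n : ℕ,
      μ (n + 1) = (2 / 2 ^ n) * ∑ j ∈ Finset.range (n + 1), (n.choose j : ℝ) * μ j + n)
    (n : ℕ) :
    HasSum
      (fun ℓ : ℕ =>
        (∏' i : ℕ, (1 - (1 : ℝ) / 2 ^ (i + 1))) *
          ((2 : ℝ) ^ ℓ / ∏ i ∈ Finset.range ℓ, (1 - (1 : ℝ) / 2 ^ (i + 1))) *
          ((1 - 1 / 2 ^ ℓ) ^ n - 1 + (n : ℝ) / 2 ^ ℓ))
      (μ n) := by
  convert hasSum_dstMeanTerm μ h0 hrec n using 2 with ℓ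
  simp only [dstMeanTerm, eulerFunction, qPochhammer, bernoulliGap, one_div_pow, mul_one_div]
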